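/- Let w ∈ Γ* and suppose al(w) = A_1 ∪ ⋯ ∪ A_k, where A_1, …, A_k are the connected components of the subgraph of (L, D) induced by al(w). Then there exist words w_1, …, w_k ∈ Γ* with w ≡ w_1 ⋯ w_k, al(w_i) = A_i for each i, and w_i w_j ≡ w_j w_i for all 1 ≤ i < j ≤ k; moreover, if w is reduced then each w_i is reduced. -/

import Mathlib

/-- The set of commutator relators defining a graph product. -/
def gpRels {L : Type} (I : L → L → Prop) (G : L → Type) [∀ α, Group (G α)] :
    Set (Monoid.CoprodI G) :=
  {x | ∃ (α β : L) (g : G α) (h : G β), I α β ∧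
    x = Monoid.CoprodI.of g * Monoid.CoprodI.of h *
        (Monoid.CoprodI.of g)⁻¹ * (Monoid.CoprodI.of h)⁻¹}

/-- The graph product of the groups `G α` over the independence relation `I`. -/
def GP {L : Type} (I : L → L → Prop) (G : L → Type) [∀ α, Group (G α)] : Type :=
  Monoid.CoprodI G ⧸ Subgroup.normalClosure (gpRels I G)

instance {L : Type} (I : L → L → Prop) (G : L → Type) [∀ α, Group (G α)] :
    Group (GP I G) := QuotientGroup.Quotient.group _

/-- The canonical homomorphism of a node group into the graph product. -/
def gpOf {L : Type} (I : L → L → Prop) (G : L → Type) [∀ α, Group (G α)] (α : L) :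
    G α →* GP I G :=
  (QuotientGroup.mk' _).comp Monoid.CoprodI.of

/-- A letter: a nontrivial element of one of the node groups. -/
abbrev Letter (L : Type) (G : L → Type) [∀ α, Group (G α)] : Type :=
  Σ α : L, {g : G α // g ≠ 1}

variable {L : Type} (I : L → L → Prop) (G : L → Type) [∀ α, Group (G α)]

/-- The element of the graph product represented by a word. -/
def evalWord (w : List (Letter L G)) : GP I G :=
  (w.map fun l => gpOf I G l.1 l.2.1).prod

/-- One elementary commutation step between trace-equivalent words. -/
inductive TraceStep : List (Letter L G) → List (Letter L G) → Prop
  | swap (u v : List (Letter L G)) (a b : Letter L G) (h : I a.1 b.1) :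
      TraceStep (u ++ a :: b :: v) (u ++ b :: a :: v)

/-- Trace equivalence: the congruence generated by commuting independent letters. -/
def TraceEquiv : List (Letter L G) → List (Letter L G) → Prop :=
  Relation.EqvGen (TraceStep I G)

/-- `IndepWord I G β u` means every letter of `u` is independent of `β`,
i.e. `u ∈ I(β)`. -/
def IndepWord (β : L) (u : List (Letter L G)) : Prop := ∀ c ∈ u, I c.1 β

/-- A word is reduced if it contains no factor `b u b'` with `b, b' ∈ Γ_β`
and `u ∈ I(β)`. -/
def Reduced (w : List (Letter L G)) : Prop :=
  ¬ ∃ (β : L) (b b' : {g : G β // g ≠ 1}) (x u y : List (Letter L G)),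
      w = x ++ (⟨β, b⟩ : Letter L G) :: (u ++ (⟨β, b'⟩ : Letter L G) :: y) ∧
      IndepWord I G β u

/-- `|w|_α` : number of letters of `w` in `Γ_α`. -/
noncomputable def countAlpha (α : L) (w : List (Letter L G)) : ℕ :=
  (w.filter fun l => Classical.propDecidable (l.1 = α) |>.decide).length

/-- The alphabet `al(w)` of a word. -/
def alph (w : List (Letter L G)) : Set L := {α | ∃ l ∈ w, l.1 = α}

/-- A reduced word is cyclically reduced if it has no factorization `≡ a v a'`
with `a, a'` letters from the same node group. -/
def IsCyclicallyReduced (w : List (Letter L G)) : Prop :=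
  Reduced I G w ∧
  ¬ ∃ (α : L) (a a' : {g : G α // g ≠ 1}) (v : List (Letter L G)),
      TraceEquiv I G w ((⟨α, a⟩ : Letter L G) :: (v ++ [(⟨α, a'⟩ : Letter L G)]))

/-- Words `u` and `v` are transposed if `u ≡ r s` and `v ≡ s r`. -/
def Transposed (u v : List (Letter L G)) : Prop :=
  ∃ r s : List (Letter L G), TraceEquiv I G u (r ++ s) ∧ TraceEquiv I G v (s ++ r)

/-- `u ≈ v` : the reflexive-transitive closure of transposition. -/
def TransClosure : List (Letter L G) → List (Letter L G) → Prop :=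
  Relation.ReflTransGen (Transposed I G)

/-- The formal inverse of a letter. -/
def letterInv (l : Letter L G) : Letter L G :=
  ⟨l.1, ⟨(l.2 : G l.1)⁻¹, inv_ne_one.mpr l.2.2⟩⟩

/-- The formal inverse `p̄` of a word `p`. -/
def wordInv (w : List (Letter L G)) : List (Letter L G) :=
  (w.map (letterInv G)).reverse

/-- The dependence graph on `L`: distinct nodes are adjacent iff not independent. -/
def depGraph : SimpleGraph L where
  Adj a b := a ≠ b ∧ ¬ I a b ∧ ¬ I b a
  symm := by
    constructor
    intro a b ⟨h1, h2, h3⟩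
    exact ⟨h1.symm, h3, h2⟩
  loopless := by constructor; intro a ⟨h1, _⟩; exact h1 rfl

/-- A word is connected if its alphabet induces a connected subgraph of the
dependence graph. -/
def ConnectedWord (w : List (Letter L G)) : Prop :=
  ((depGraph I).induce (alph G w)).Connected

/-- A word `w` is `α`-reduced if every word with fewer letters from `Γ_α`
represents a different element of the graph product. -/
def AlphaReduced (α : L) (w : List (Letter L G)) : Prop :=
  ∀ w' : List (Letter L G), countAlpha G α w' < countAlpha G α w →
    evalWord I G w' ≠ evalWord I G w

/-!
Distinct components are non-adjacent in the dependence graph, so any two letters from different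
components are independent. Hence the letters of one component can be commuted past all the
others: `w` is trace equivalent to the concatenation of its projections `w_i` (the subwords of
letters from `A_i`), and any two projections commute. A forbidden factor `b u b'` of `w_i` lifts
to one of `w`, because the letters of `w` between `b` and `b'` that are missing from `u` belong
to other components and are therefore independent of the node of `b`.
-/

section TraceEquivalence

variable {I G}
variable {u v : List (Letter L G)}

theorem indep_of_not_depGraph_adj (hsym : ∀ α β, I α β → I β α) {α β : L} (hne : α ≠ β)
    (h : ¬ (depGraph I).Adj α β) : I α β := by
  by_contra hI
  exact h ⟨hne, hI, fun h' => hI (hsym β α h')⟩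

theorem TraceStep.append_left (x : List (Letter L G)) (h : TraceStep I G u v) :
    TraceStep I G (x ++ u) (x ++ v) := by
  cases h with
  | swap u' v' a b hab => simpa using TraceStep.swap (x ++ u') v' a b hab

theorem TraceEquiv.map_of_step {f : List (Letter L G) → List (Letter L G)}
    (hf : ∀ u v, TraceStep I G u v → TraceStep I G (f u) (f v)) (h : TraceEquiv I G u v) :
    TraceEquiv I G (f u) (f v) := by
  induction h with
  | rel _ _ h => exact .rel _ _ (hf _ _ h)
  | refl _ => exact .refl _
  | symm _ _ _ ih => exact .symm _ _ ih
  | trans _ _ _ _ _ ih₁ ih₂ => exact .trans _ _ _ ih₁ ih₂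

theorem TraceEquiv.append_left (x : List (Letter L G)) (h : TraceEquiv I G u v) :
    TraceEquiv I G (x ++ u) (x ++ v) :=
  h.map_of_step fun _ _ => TraceStep.append_left x

theorem traceEquiv_cons_append {a : Letter L G} (ha : ∀ c ∈ u, I a.1 c.1) :
    TraceEquiv I G (a :: (u ++ v)) (u ++ a :: v) := by
  induction u with
  | nil => exact .refl _
  | cons c u ih =>
    have hswap : TraceStep I G (a :: c :: (u ++ v)) (c :: a :: (u ++ v)) :=
      TraceStep.swap [] _ a c (ha c List.mem_cons_self)
    exact .trans _ _ _ (.rel _ _ hswap)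
      ((ih fun d hd => ha d (List.mem_cons_of_mem c hd)).append_left [c])

theorem traceEquiv_append_comm (h : ∀ c ∈ u, ∀ d ∈ v, I c.1 d.1) :
    TraceEquiv I G (u ++ v) (v ++ u) := by
  induction u with
  | nil => simpa using .refl _
  | cons a u ih =>
    have hu : TraceEquiv I G (u ++ v) (v ++ u) :=
      ih fun c hc => h c (List.mem_cons_of_mem a hc)
    exact .trans _ _ _ (hu.append_left [a])
      (traceEquiv_cons_append (h a List.mem_cons_self))

theorem traceEquiv_filter_append_filter_not (p : Letter L G → Bool) (w : List (Letter L G))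
    (h : ∀ a ∈ w, ∀ b ∈ w, p a → ¬ p b → I b.1 a.1) :
    TraceEquiv I G w (w.filter p ++ w.filter (fun l => !p l)) := by
  induction w with
  | nil => exact .refl _
  | cons a w ih =>
    have hw := (ih fun x hx y hy => h x (.tail a hx) y (.tail a hy)).append_left [a]
    by_cases hpa : p a
    · simpa [List.filter_cons, hpa] using hw
    · have hmove : TraceEquiv I G (a :: (w.filter p ++ w.filter (fun l => !p l)))
          (w.filter p ++ a :: w.filter (fun l => !p l)) :=
        traceEquiv_cons_append fun c hc =>
          h c (.tail a (List.mem_of_mem_filter hc)) a List.mem_cons_self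
            (List.of_mem_filter hc) hpa
      rw [List.filter_cons_of_neg hpa, List.filter_cons_of_pos (by simpa using hpa)]
      exact .trans _ _ _ hw hmove

theorem traceEquiv_flatten_ofFn_filter {k : ℕ} (p : Fin k → Letter L G → Bool)
    (w : List (Letter L G)) (hcover : ∀ l ∈ w, ∃ i, p i l)
    (hexcl : ∀ i j l, p i l → p j l → i = j)
    (hindep : ∀ i j, i ≠ j → ∀ a ∈ w, ∀ b ∈ w, p i a → p j b → I b.1 a.1) :
    TraceEquiv I G w (List.ofFn fun i => w.filter (p i)).flatten := by
  induction k generalizing w with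
  | zero =>
    obtain rfl : w = [] :=
      List.eq_nil_iff_forall_not_mem.mpr fun l hl => (hcover l hl).elim fun i _ => i.elim0
    exact .refl _
  | succ k ih =>
    set v := w.filter (fun l => !p 0 l)
    have hsplit : TraceEquiv I G w (w.filter (p 0) ++ v) :=
      traceEquiv_filter_append_filter_not _ w fun a ha b hb hpa hpb => by
        obtain ⟨j, hj⟩ := hcover b hb
        exact hindep 0 j (by rintro rfl; exact hpb hj) a ha b hb hpa hj
    have hv : TraceEquiv I G v (List.ofFn fun i => v.filter (p i.succ)).flatten := by
      refine ih (fun i => p i.succ) v (fun l hl => ?_)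
        (fun i j l hi hj => Fin.succ_injective _ (hexcl _ _ l hi hj))
        (fun i j hij a ha b hb => hindep _ _ (Fin.succ_injective _ |>.ne hij) a
          (List.mem_of_mem_filter ha) b (List.mem_of_mem_filter hb))
      obtain ⟨i, hi⟩ := hcover l (List.mem_of_mem_filter hl)
      have hi0 : i ≠ 0 := by rintro rfl; simpa [hi] using List.of_mem_filter hl
      obtain ⟨j, rfl⟩ := Fin.eq_succ_of_ne_zero hi0
      exact ⟨j, hi⟩
    have hblocks : ∀ i : Fin k, v.filter (p i.succ) = w.filter (p i.succ) := fun i => by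
      rw [List.filter_filter]
      refine List.filter_congr fun a _ => ?_
      cases hpa : p i.succ a
      · rfl
      · have hp0 : p 0 a = false :=
          Bool.eq_false_iff.mpr fun h => Fin.succ_ne_zero i (hexcl _ _ a hpa h)
        simp [hp0]
    rw [List.ofFn_succ, List.flatten_cons]
    simp only [← hblocks]
    exact .trans _ _ _ hsplit (hv.append_left _)

theorem Reduced.filter (p : Letter L G → Bool) {w : List (Letter L G)} (hw : Reduced I G w)
    (h : ∀ a ∈ w, ∀ b ∈ w, p a → ¬ p b → I b.1 a.1) : Reduced I G (w.filter p) := by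
  rintro ⟨β, b, b', x, u, y, hxy, hu⟩
  obtain ⟨l₁, l₂, rfl, -, hl₂⟩ := List.filter_eq_append_iff.mp hxy
  obtain ⟨m₁, m₂, rfl, -, hb, hm₂⟩ := List.filter_eq_cons_iff.mp hl₂
  obtain ⟨n₁, n₂, rfl, hn₁, hn₂⟩ := List.filter_eq_append_iff.mp hm₂
  obtain ⟨o₁, o₂, rfl, ho₁, -, -⟩ := List.filter_eq_cons_iff.mp hn₂
  refine hw ⟨β, b, b', l₁ ++ m₁, n₁ ++ o₁, o₂, by simp, fun c hc => ?_⟩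
  by_cases hpc : p c
  · have hcn : c ∈ n₁ := (List.mem_append.mp hc).resolve_right fun hco => ho₁ c hco hpc
    exact hu c (hn₁ ▸ List.mem_filter.mpr ⟨hcn, hpc⟩)
  · have hcw : c ∈ l₁ ++ (m₁ ++ ⟨β, b⟩ :: (n₁ ++ (o₁ ++ ⟨β, b'⟩ :: o₂))) := by
      rcases List.mem_append.mp hc with hc | hc <;> simp [hc]
    exact h ⟨β, b⟩ (by simp) c hcw hb hpc

theorem alph_filter_mem (A : Set L) [DecidablePred (· ∈ A)] (w : List (Letter L G)) :
    alph G (w.filter fun l => l.1 ∈ A) = alph G w ∩ A := by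
  ext α
  simp only [alph, List.mem_filter, decide_eq_true_eq, Set.mem_ofPred_eq, Set.mem_inter_iff]
  constructor
  · rintro ⟨l, ⟨hl, hlA⟩, rfl⟩
    exact ⟨⟨l, hl, rfl⟩, hlA⟩
  · rintro ⟨⟨l, hl, rfl⟩, hlA⟩
    exact ⟨l, ⟨hl, hlA⟩, rfl⟩

end TraceEquivalence

theorem decomposition_into_connected_components_general
    {L : Type} (I : L → L → Prop) (G : L → Type) [∀ α, Group (G α)]
    (hsym : ∀ α β, I α β → I β α)
    (w : List (Letter L G)) (k : ℕ) (A : Fin k → Set L)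
    (hunion : (⋃ i, A i) = alph G w)
    (hdisj : ∀ i j, i ≠ j → Disjoint (A i) (A j))
    (hsep : ∀ i j, i ≠ j → ∀ a ∈ A i, ∀ b ∈ A j, ¬ (depGraph I).Adj a b) :
    ∃ ws : Fin k → List (Letter L G),
      TraceEquiv I G w (List.ofFn ws).flatten ∧
      (∀ i, alph G (ws i) = A i) ∧
      (∀ i j, i ≠ j → TraceEquiv I G (ws i ++ ws j) (ws j ++ ws i)) ∧
      (Reduced I G w → ∀ i, Reduced I G (ws i)) := by
  classical
  have hindep : ∀ i j, i ≠ j → ∀ α ∈ A i, ∀ β ∈ A j, I α β := fun i j hij α hα β hβ =>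
    indep_of_not_depGraph_adj hsym ((hdisj i j hij).ne_of_mem hα hβ) (hsep i j hij α hα β hβ)
  have hcover : ∀ l ∈ w, ∃ i, l.1 ∈ A i := fun l hl =>
    Set.mem_iUnion.mp (hunion ▸ ⟨l, hl, rfl⟩)
  refine ⟨fun i => w.filter fun l => l.1 ∈ A i, ?_, fun i => ?_, fun i j hij => ?_,
    fun hw i => hw.filter _ fun a _ b hb ha hb' => ?_⟩
  · refine traceEquiv_flatten_ofFn_filter _ w (by simpa using hcover)
      (fun i j l hi hj => ?_) (fun i j hij a _ b _ ha hb => ?_)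
    · by_contra hij
      exact (hdisj i j hij).ne_of_mem (by simpa using hi) (by simpa using hj) rfl
    · exact hindep j i (Ne.symm hij) _ (by simpa using hb) _ (by simpa using ha)
  · rw [alph_filter_mem, ← hunion]
    exact Set.inter_eq_right.mpr (Set.subset_iUnion A i)
  · refine traceEquiv_append_comm fun c hc d hd => ?_
    exact hindep i j hij _ (by simpa using (List.mem_filter.mp hc).2)
      _ (by simpa using (List.mem_filter.mp hd).2)
  · obtain ⟨j, hj⟩ := hcover b hb
    have hji : j ≠ i := by rintro rfl; exact hb' (by simpa using hj)
    exact hindep j i hji _ hj _ (by simpa using ha)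

theorem decomposition_into_connected_components
    {L : Type} [Finite L] (I : L → L → Prop) (G : L → Type) [∀ α, Group (G α)]
    (hirr : ∀ α, ¬ I α α) (hsym : ∀ α β, I α β → I β α)
    (w : List (Letter L G)) (k : ℕ) (A : Fin k → Set L)
    (hunion : (⋃ i, A i) = alph G w)
    (hne : ∀ i, (A i).Nonempty)
    (hdisj : ∀ i j, i ≠ j → Disjoint (A i) (A j))
    (hconn : ∀ i, ((depGraph I).induce (A i)).Connected)
    (hsep : ∀ i j, i ≠ j → ∀ a ∈ A i, ∀ b ∈ A j, ¬ (depGraph I).Adj a b) :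
    ∃ ws : Fin k → List (Letter L G),
      TraceEquiv I G w (List.ofFn ws).flatten ∧
      (∀ i, alph G (ws i) = A i) ∧
      (∀ i j, i ≠ j → TraceEquiv I G (ws i ++ ws j) (ws j ++ ws i)) ∧
      (Reduced I G w → ∀ i, Reduced I G (ws i)) :=
  decomposition_into_connected_components_general I G hsym w k A hunion hdisj hsep
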